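/- arXiv:math/0601587 — 6 statements merged into one kernel-verified Lean document; each statement's English description precedes it below -/
import Mathlib

section
/- The stabilizer in SL(3,ℤ) of the positive definite matrix A(1,0,0) = [[2,0,0],[0,2,1],[0,1,2]], namely {g ∈ SL(3,ℤ) : gᵀ·A(1,0,0)·g = A(1,0,0)}, is generated by the matrices g₄ = [[−1,0,0],[0,1,1],[0,0,−1]] and g₅ = [[−1,0,0],[0,0,1],[0,1,0]], and is isomorphic to the dihedral group D₆ of order 12. -/
open Matrix

/-- `SL(3, ℤ)`, the group of 3 × 3 integer matrices of determinant one. -/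
abbrev SL3 := Matrix.SpecialLinearGroup (Fin 3) ℤ

/-- The stabilizer in `SL(3, ℤ)` of an integer matrix `B` under the congruence action
`A · g = gᵀ A g`. -/
def congrStab (B : Matrix (Fin 3) (Fin 3) ℤ) : Subgroup SL3 where
  carrier := {g | (g : Matrix (Fin 3) (Fin 3) ℤ)ᵀ * B * (g : Matrix (Fin 3) (Fin 3) ℤ) = B}
  one_mem' := by simp
  mul_mem' := by
    intro a b ha hb
    simp only [Set.mem_setOf_eq] at *
    calc ((a * b : SL3) : Matrix (Fin 3) (Fin 3) ℤ)ᵀ * B * ((a * b : SL3) : Matrix (Fin 3) (Fin 3) ℤ)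
        = (b : Matrix (Fin 3) (Fin 3) ℤ)ᵀ * ((a : Matrix (Fin 3) (Fin 3) ℤ)ᵀ * B * a) * b := by
          simp [Matrix.transpose_mul, Matrix.mul_assoc]
      _ = B := by rw [ha, hb]
  inv_mem' := by
    intro g hg
    simp only [Set.mem_setOf_eq] at *
    have hc : (g : Matrix (Fin 3) (Fin 3) ℤ) * ((g⁻¹ : SL3) : Matrix (Fin 3) (Fin 3) ℤ) = 1 := by
      rw [← Matrix.SpecialLinearGroup.coe_mul, mul_inv_cancel, Matrix.SpecialLinearGroup.coe_one]
    calc ((g⁻¹ : SL3) : Matrix (Fin 3) (Fin 3) ℤ)ᵀ * B * ((g⁻¹ : SL3) : Matrix (Fin 3) (Fin 3) ℤ)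
        = ((g⁻¹ : SL3) : Matrix (Fin 3) (Fin 3) ℤ)ᵀ *
            ((g : Matrix (Fin 3) (Fin 3) ℤ)ᵀ * B * g) *
            ((g⁻¹ : SL3) : Matrix (Fin 3) (Fin 3) ℤ) := by rw [hg]
      _ = ((g : Matrix (Fin 3) (Fin 3) ℤ) * ((g⁻¹ : SL3) : Matrix (Fin 3) (Fin 3) ℤ))ᵀ * B *
            ((g : Matrix (Fin 3) (Fin 3) ℤ) * ((g⁻¹ : SL3) : Matrix (Fin 3) (Fin 3) ℤ)) := by
          simp [Matrix.transpose_mul, Matrix.mul_assoc]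
      _ = B := by rw [hc]; simp

/-- `g₄ = [[-1,0,0],[0,1,1],[0,0,-1]] ∈ SL(3, ℤ)`. -/
def g₄ : SL3 := ⟨!![-1, 0, 0; 0, 1, 1; 0, 0, -1], by rw [Matrix.det_fin_three]; rfl⟩

/-- `g₅ = [[-1,0,0],[0,0,1],[0,1,0]] ∈ SL(3, ℤ)`. -/
def g₅ : SL3 := ⟨!![-1, 0, 0; 0, 0, 1; 0, 1, 0], by rw [Matrix.det_fin_three]; rfl⟩

/-- The matrix `A(1,0,0)` representing the vertex `Q` of Soulé's fundamental domain. -/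
def A100 : Matrix (Fin 3) (Fin 3) ℤ := !![2, 0, 0; 0, 2, 1; 0, 1, 2]


namespace QAux

open DihedralGroup

def S : SL3 := g₅
def T : SL3 := g₄ * g₅

lemma Scoe : (S : Matrix (Fin 3) (Fin 3) ℤ) = !![-1,0,0;0,0,1;0,1,0] := rfl

lemma Tcoe : (T : Matrix (Fin 3) (Fin 3) ℤ) = !![1,0,0;0,1,1;0,-1,0] := by
  show (g₄ : Matrix (Fin 3) (Fin 3) ℤ) * (g₅ : Matrix (Fin 3) (Fin 3) ℤ) = _
  norm_num [g₄, g₅, Matrix.mul_fin_three]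

lemma one_coe : ((1 : SL3) : Matrix (Fin 3) (Fin 3) ℤ) = !![1,0,0;0,1,0;0,0,1] := by
  rw [Matrix.SpecialLinearGroup.coe_one]; exact Matrix.one_fin_three

lemma S2 : S * S = 1 := by
  apply Subtype.ext
  show (S : Matrix (Fin 3) (Fin 3) ℤ) * S = _
  rw [Scoe, one_coe]
  norm_num [Matrix.mul_fin_three]

lemma T6 : T ^ 6 = 1 := by
  apply Subtype.ext
  rw [Matrix.SpecialLinearGroup.coe_pow, Tcoe, one_coe]
  norm_num [pow_succ, Matrix.mul_fin_three]

lemma TST : T * S * T = S := by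
  apply Subtype.ext
  show ((T : Matrix (Fin 3) (Fin 3) ℤ) * S) * T = (S : Matrix (Fin 3) (Fin 3) ℤ)
  rw [Tcoe, Scoe]
  norm_num [Matrix.mul_fin_three]

lemma TS : T * S = S * T⁻¹ := by
  calc T * S = (T * S * T) * T⁻¹ := by group
    _ = S * T⁻¹ := by rw [TST]

lemma TnS : ∀ n : ℕ, T ^ n * S = S * (T ^ n)⁻¹ := by
  intro n
  induction n with
  | zero => simp
  | succ k ih =>
    rw [pow_succ, mul_assoc, TS, ← mul_assoc, ih]
    group

lemma Tmod : ∀ n : ℕ, T ^ (n % 6) = T ^ n := by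
  intro n
  conv_rhs => rw [← Nat.div_add_mod n 6]
  rw [pow_add, pow_mul, T6, one_pow, one_mul]

lemma Tadd (i j : ZMod 6) : T ^ (i + j).val = T ^ i.val * T ^ j.val := by
  rw [← pow_add, ZMod.val_add, Tmod]

lemma Tsub (i j : ZMod 6) : T ^ (j - i).val = (T ^ i.val)⁻¹ * T ^ j.val := by
  have h : T ^ (j - i).val * T ^ i.val = T ^ j.val := by
    rw [← Tadd, sub_add_cancel]
  rw [← h]; group

def fFun : DihedralGroup 6 → SL3
  | .r i => T ^ i.val
  | .sr i => S * T ^ i.val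

def f : DihedralGroup 6 →* SL3 where
  toFun := fFun
  map_one' := by show T ^ (0 : ZMod 6).val = 1; simp
  map_mul' := by
    rintro (i | i) (j | j)
    · show fFun (.r (i + j)) = T ^ i.val * T ^ j.val
      exact Tadd i j
    · show fFun (.sr (j - i)) = T ^ i.val * (S * T ^ j.val)
      show S * T ^ (j - i).val = _
      rw [Tsub, ← mul_assoc, ← TnS, mul_assoc]
    · show fFun (.sr (i + j)) = (S * T ^ i.val) * T ^ j.val
      show S * T ^ (i + j).val = _
      rw [Tadd, mul_assoc]
    · show fFun (.r (j - i)) = (S * T ^ i.val) * (S * T ^ j.val)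
      show T ^ (j - i).val = _
      rw [Tsub]
      have h2 : S * T ^ i.val * S = (T ^ i.val)⁻¹ := by
        rw [show S * T ^ i.val * S = S * (T ^ i.val * S) by group, TnS, ← mul_assoc, S2, one_mul]
      rw [show S * T ^ i.val * (S * T ^ j.val) = (S * T ^ i.val * S) * T ^ j.val by group, h2]

lemma fr_val (i : ZMod 6) :
    (f (.r i) : Matrix (Fin 3) (Fin 3) ℤ) = (!![1,0,0;0,1,1;0,-1,0]) ^ i.val := by
  show ((T ^ i.val : SL3) : Matrix (Fin 3) (Fin 3) ℤ) = _
  rw [Matrix.SpecialLinearGroup.coe_pow, Tcoe]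

lemma fsr_val (i : ZMod 6) :
    (f (.sr i) : Matrix (Fin 3) (Fin 3) ℤ)
      = !![-1,0,0;0,0,1;0,1,0] * (!![1,0,0;0,1,1;0,-1,0]) ^ i.val := by
  show ((S * T ^ i.val : SL3) : Matrix (Fin 3) (Fin 3) ℤ) = _
  rw [Matrix.SpecialLinearGroup.coe_mul, Matrix.SpecialLinearGroup.coe_pow, Tcoe, Scoe]

lemma val0 : ((0 : ZMod 6).val) = 0 := rfl
lemma val1 : ((1 : ZMod 6).val) = 1 := rfl
lemma val2 : ((2 : ZMod 6).val) = 2 := rfl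
lemma val3 : ((3 : ZMod 6).val) = 3 := rfl
lemma val4 : ((4 : ZMod 6).val) = 4 := rfl
lemma val5 : ((5 : ZMod 6).val) = 5 := rfl

lemma fr0 : (f (.r 0) : Matrix (Fin 3) (Fin 3) ℤ) = !![1,0,0;0,1,0;0,0,1] := by
  rw [fr_val, val0, pow_zero]; exact Matrix.one_fin_three
lemma fr1 : (f (.r 1) : Matrix (Fin 3) (Fin 3) ℤ) = !![1,0,0;0,1,1;0,-1,0] := by
  rw [fr_val, val1]; norm_num [pow_succ, Matrix.mul_fin_three, Matrix.one_fin_three]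
lemma fr2 : (f (.r 2) : Matrix (Fin 3) (Fin 3) ℤ) = !![1,0,0;0,0,1;0,-1,-1] := by
  rw [fr_val, val2]; norm_num [pow_succ, Matrix.mul_fin_three, Matrix.one_fin_three]
lemma fr3 : (f (.r 3) : Matrix (Fin 3) (Fin 3) ℤ) = !![1,0,0;0,-1,0;0,0,-1] := by
  rw [fr_val, val3]; norm_num [pow_succ, Matrix.mul_fin_three, Matrix.one_fin_three]
lemma fr4 : (f (.r 4) : Matrix (Fin 3) (Fin 3) ℤ) = !![1,0,0;0,-1,-1;0,1,0] := by
  rw [fr_val, val4]; norm_num [pow_succ, Matrix.mul_fin_three, Matrix.one_fin_three]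
lemma fr5 : (f (.r 5) : Matrix (Fin 3) (Fin 3) ℤ) = !![1,0,0;0,0,-1;0,1,1] := by
  rw [fr_val, val5]; norm_num [pow_succ, Matrix.mul_fin_three, Matrix.one_fin_three]
lemma fsr0 : (f (.sr 0) : Matrix (Fin 3) (Fin 3) ℤ) = !![-1,0,0;0,0,1;0,1,0] := by
  rw [fsr_val, val0]; norm_num [pow_succ, Matrix.mul_fin_three, Matrix.one_fin_three]
lemma fsr1 : (f (.sr 1) : Matrix (Fin 3) (Fin 3) ℤ) = !![-1,0,0;0,-1,0;0,1,1] := by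
  rw [fsr_val, val1]; norm_num [pow_succ, Matrix.mul_fin_three, Matrix.one_fin_three]
lemma fsr2 : (f (.sr 2) : Matrix (Fin 3) (Fin 3) ℤ) = !![-1,0,0;0,-1,-1;0,0,1] := by
  rw [fsr_val, val2]; norm_num [pow_succ, Matrix.mul_fin_three, Matrix.one_fin_three]
lemma fsr3 : (f (.sr 3) : Matrix (Fin 3) (Fin 3) ℤ) = !![-1,0,0;0,0,-1;0,-1,0] := by
  rw [fsr_val, val3]; norm_num [pow_succ, Matrix.mul_fin_three, Matrix.one_fin_three]
lemma fsr4 : (f (.sr 4) : Matrix (Fin 3) (Fin 3) ℤ) = !![-1,0,0;0,1,0;0,-1,-1] := by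
  rw [fsr_val, val4]; norm_num [pow_succ, Matrix.mul_fin_three, Matrix.one_fin_three]
lemma fsr5 : (f (.sr 5) : Matrix (Fin 3) (Fin 3) ℤ) = !![-1,0,0;0,1,1;0,0,-1] := by
  rw [fsr_val, val5]; norm_num [pow_succ, Matrix.mul_fin_three, Matrix.one_fin_three]

lemma Tm_pow_00 : ∀ n : ℕ, ((!![1,0,0;0,1,1;0,-1,0] : Matrix (Fin 3) (Fin 3) ℤ) ^ n) 0 0 = 1 := by
  intro n
  induction n with
  | zero => simp
  | succ k ih =>
    have h1 : (!![(1:ℤ),0,0;0,1,1;0,-1,0]) 0 0 = 1 := rfl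
    have h2 : (!![(1:ℤ),0,0;0,1,1;0,-1,0]) 1 0 = 0 := rfl
    have h3 : (!![(1:ℤ),0,0;0,1,1;0,-1,0]) 2 0 = 0 := rfl
    rw [pow_succ, Matrix.mul_apply, Fin.sum_univ_three, h1, h2, h3, ih]
    ring

lemma finj : Function.Injective f := by
  rw [injective_iff_map_eq_one]
  rintro (i | i) hx
  · have hval : (f (.r i) : Matrix (Fin 3) (Fin 3) ℤ) = 1 := by
      rw [hx, Matrix.SpecialLinearGroup.coe_one]
    rw [fr_val, Matrix.one_fin_three] at hval
    obtain ⟨n, hn, he⟩ : ∃ n, n < 6 ∧ i.val = n := ⟨i.val, i.val_lt, rfl⟩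
    rw [he] at hval
    interval_cases n
    · rw [one_def]
      exact congrArg DihedralGroup.r ((ZMod.val_eq_zero i).mp he)
    · exact absurd hval (by decide)
    · exact absurd hval (by decide)
    · exact absurd hval (by decide)
    · exact absurd hval (by decide)
    · exact absurd hval (by decide)
  · exfalso
    have h00 : (f (.sr i) : Matrix (Fin 3) (Fin 3) ℤ) 0 0 = -1 := by
      rw [fsr_val, Matrix.mul_apply, Fin.sum_univ_three, Tm_pow_00]
      norm_num
      exact Or.inl rfl
    rw [hx, Matrix.SpecialLinearGroup.coe_one] at h00
    norm_num [Matrix.one_apply] at h00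

def vec : Fin 8 → ℤ × ℤ × ℤ :=
  ![(1,0,0),(-1,0,0),(0,1,0),(0,-1,0),(0,0,1),(0,0,-1),(0,1,-1),(0,-1,1)]

def Bf (u v : ℤ × ℤ × ℤ) : ℤ :=
  2*u.1*v.1 + 2*u.2.1*v.2.1 + 2*u.2.2*v.2.2 + u.2.1*v.2.2 + u.2.2*v.2.1

def Df (u v w : ℤ × ℤ × ℤ) : ℤ :=
  u.1*(v.2.1*w.2.2 - v.2.2*w.2.1) - v.1*(u.2.1*w.2.2 - u.2.2*w.2.1)
    + w.1*(u.2.1*v.2.2 - u.2.2*v.2.1)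

theorem key : ∀ k0 k1 k2 : Fin 8, Bf (vec k0) (vec k1) = 0 → Bf (vec k0) (vec k2) = 0 →
    Bf (vec k1) (vec k2) = 1 → Df (vec k0) (vec k1) (vec k2) = 1 →
    (k0,k1,k2) ∈ ([(0,2,4),(0,3,5),(0,4,7),(0,5,6),(0,6,2),(0,7,3),
      (1,2,6),(1,3,7),(1,4,2),(1,5,3),(1,6,5),(1,7,4)] : List (Fin 8 × Fin 8 × Fin 8)) := by
  decide

theorem col_mem (a b c : ℤ) (h : 2*a*a + 2*b*b + 2*c*c + 2*b*c = 2) :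
    ∃ k : Fin 8, vec k = (a, b, c) := by
  have ha : -1 ≤ a ∧ a ≤ 1 := by
    constructor <;> nlinarith [sq_nonneg (2*b+c), sq_nonneg c, sq_nonneg (a+1), sq_nonneg (a-1)]
  have hb : -1 ≤ b ∧ b ≤ 1 := by
    constructor <;> nlinarith [sq_nonneg (b+2*c), sq_nonneg a, sq_nonneg (b+1), sq_nonneg (b-1)]
  have hc : -1 ≤ c ∧ c ≤ 1 := by
    constructor <;> nlinarith [sq_nonneg (2*b+c), sq_nonneg a, sq_nonneg (c+1), sq_nonneg (c-1)]
  obtain ⟨ha1, ha2⟩ := ha; obtain ⟨hb1, hb2⟩ := hb; obtain ⟨hc1, hc2⟩ := hc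
  interval_cases a <;> interval_cases b <;> interval_cases c <;>
    first
      | (exfalso; omega)
      | decide

lemma closure_le_stab : Subgroup.closure {g₄, g₅} ≤ congrStab A100 := by
  rw [Subgroup.closure_le]
  rintro x (rfl | rfl)
  · show ((g₄ : Matrix (Fin 3) (Fin 3) ℤ))ᵀ * A100 * (g₄ : Matrix (Fin 3) (Fin 3) ℤ) = A100
    have h1 : (g₄ : Matrix (Fin 3) (Fin 3) ℤ) = !![-1,0,0;0,1,1;0,0,-1] := rfl
    have h2 : (!![(-1:ℤ),0,0;0,1,1;0,0,-1])ᵀ = !![-1,0,0;0,1,0;0,1,-1] := by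
      ext i j; fin_cases i <;> fin_cases j <;> rfl
    rw [h1, h2, A100]
    norm_num [Matrix.mul_fin_three]
  · show ((g₅ : Matrix (Fin 3) (Fin 3) ℤ))ᵀ * A100 * (g₅ : Matrix (Fin 3) (Fin 3) ℤ) = A100
    have h1 : (g₅ : Matrix (Fin 3) (Fin 3) ℤ) = !![-1,0,0;0,0,1;0,1,0] := rfl
    have h2 : (!![(-1:ℤ),0,0;0,0,1;0,1,0])ᵀ = !![-1,0,0;0,0,1;0,1,0] := by
      ext i j; fin_cases i <;> fin_cases j <;> rfl
    rw [h1, h2, A100]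
    norm_num [Matrix.mul_fin_three]

lemma range_le_closure : f.range ≤ Subgroup.closure {g₄, g₅} := by
  have hS : S ∈ Subgroup.closure {g₄, g₅} :=
    Subgroup.subset_closure (by right; rfl)
  have hT : T ∈ Subgroup.closure {g₄, g₅} :=
    mul_mem (Subgroup.subset_closure (by left; rfl)) (Subgroup.subset_closure (by right; rfl))
  rintro x ⟨y, rfl⟩
  rcases y with i | i
  · exact pow_mem hT _
  · exact mul_mem hS (pow_mem hT _)

lemma build (g : SL3) (x : DihedralGroup 6) {N : Matrix (Fin 3) (Fin 3) ℤ}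
    (hfx : (f x : Matrix (Fin 3) (Fin 3) ℤ) = N)
    (h0 : (N 0 0, N 1 0, N 2 0)
      = ((g : Matrix (Fin 3) (Fin 3) ℤ) 0 0, (g : Matrix (Fin 3) (Fin 3) ℤ) 1 0,
          (g : Matrix (Fin 3) (Fin 3) ℤ) 2 0))
    (h1 : (N 0 1, N 1 1, N 2 1)
      = ((g : Matrix (Fin 3) (Fin 3) ℤ) 0 1, (g : Matrix (Fin 3) (Fin 3) ℤ) 1 1,
          (g : Matrix (Fin 3) (Fin 3) ℤ) 2 1))
    (h2 : (N 0 2, N 1 2, N 2 2)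
      = ((g : Matrix (Fin 3) (Fin 3) ℤ) 0 2, (g : Matrix (Fin 3) (Fin 3) ℤ) 1 2,
          (g : Matrix (Fin 3) (Fin 3) ℤ) 2 2)) : g ∈ f.range := by
  refine ⟨x, Subtype.ext ?_⟩
  rw [hfx]
  simp only [Prod.mk.injEq] at h0 h1 h2
  obtain ⟨e1, e2, e3⟩ := h0
  obtain ⟨e4, e5, e6⟩ := h1
  obtain ⟨e7, e8, e9⟩ := h2
  ext i j
  fin_cases i <;> fin_cases j
  · exact e1
  · exact e4
  · exact e7
  · exact e2
  · exact e5
  · exact e8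
  · exact e3
  · exact e6
  · exact e9

set_option maxHeartbeats 1000000 in
lemma stab_le_range : congrStab A100 ≤ f.range := by
  intro g hg
  have hg' : ((g : Matrix (Fin 3) (Fin 3) ℤ))ᵀ * A100 * (g : Matrix (Fin 3) (Fin 3) ℤ) = A100 := hg
  have e00 := congrFun (congrFun hg' 0) 0
  have e11 := congrFun (congrFun hg' 1) 1
  have e22 := congrFun (congrFun hg' 2) 2
  have e01 := congrFun (congrFun hg' 0) 1
  have e02 := congrFun (congrFun hg' 0) 2
  have e12 := congrFun (congrFun hg' 1) 2
  simp [Matrix.mul_apply, Fin.sum_univ_three, A100] at e00 e11 e22 e01 e02 e12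
  have hdet : Matrix.det (g : Matrix (Fin 3) (Fin 3) ℤ) = 1 := g.prop
  rw [Matrix.det_fin_three] at hdet
  set M := (g : Matrix (Fin 3) (Fin 3) ℤ) with hM
  obtain ⟨k0, hk0⟩ := col_mem (M 0 0) (M 1 0) (M 2 0) (by linear_combination e00)
  obtain ⟨k1, hk1⟩ := col_mem (M 0 1) (M 1 1) (M 2 1) (by linear_combination e11)
  obtain ⟨k2, hk2⟩ := col_mem (M 0 2) (M 1 2) (M 2 2) (by linear_combination e22)
  have hB01 : Bf (vec k0) (vec k1) = 0 := by
    rw [hk0, hk1]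
    show 2*(M 0 0)*(M 0 1) + 2*(M 1 0)*(M 1 1) + 2*(M 2 0)*(M 2 1)
      + (M 1 0)*(M 2 1) + (M 2 0)*(M 1 1) = 0
    linear_combination e01
  have hB02 : Bf (vec k0) (vec k2) = 0 := by
    rw [hk0, hk2]
    show 2*(M 0 0)*(M 0 2) + 2*(M 1 0)*(M 1 2) + 2*(M 2 0)*(M 2 2)
      + (M 1 0)*(M 2 2) + (M 2 0)*(M 1 2) = 0
    linear_combination e02
  have hB12 : Bf (vec k1) (vec k2) = 1 := by
    rw [hk1, hk2]
    show 2*(M 0 1)*(M 0 2) + 2*(M 1 1)*(M 1 2) + 2*(M 2 1)*(M 2 2)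
      + (M 1 1)*(M 2 2) + (M 2 1)*(M 1 2) = 1
    linear_combination e12
  have hD : Df (vec k0) (vec k1) (vec k2) = 1 := by
    rw [hk0, hk1, hk2]
    show (M 0 0)*((M 1 1)*(M 2 2) - (M 2 1)*(M 1 2))
      - (M 0 1)*((M 1 0)*(M 2 2) - (M 2 0)*(M 1 2))
      + (M 0 2)*((M 1 0)*(M 2 1) - (M 2 0)*(M 1 1)) = 1
    linear_combination hdet
  have hmem := key k0 k1 k2 hB01 hB02 hB12 hD
  simp only [List.mem_cons, List.not_mem_nil, or_false, Prod.mk.injEq] at hmem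
  rcases hmem with ⟨h0,h1,h2⟩|⟨h0,h1,h2⟩|⟨h0,h1,h2⟩|⟨h0,h1,h2⟩|⟨h0,h1,h2⟩|⟨h0,h1,h2⟩|
    ⟨h0,h1,h2⟩|⟨h0,h1,h2⟩|⟨h0,h1,h2⟩|⟨h0,h1,h2⟩|⟨h0,h1,h2⟩|⟨h0,h1,h2⟩ <;>
    subst h0 <;> subst h1 <;> subst h2
  · exact build g (.r 0) fr0 hk0 hk1 hk2
  · exact build g (.r 3) fr3 hk0 hk1 hk2
  · exact build g (.r 5) fr5 hk0 hk1 hk2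
  · exact build g (.r 2) fr2 hk0 hk1 hk2
  · exact build g (.r 1) fr1 hk0 hk1 hk2
  · exact build g (.r 4) fr4 hk0 hk1 hk2
  · exact build g (.sr 5) fsr5 hk0 hk1 hk2
  · exact build g (.sr 2) fsr2 hk0 hk1 hk2
  · exact build g (.sr 0) fsr0 hk0 hk1 hk2
  · exact build g (.sr 3) fsr3 hk0 hk1 hk2
  · exact build g (.sr 4) fsr4 hk0 hk1 hk2
  · exact build g (.sr 1) fsr1 hk0 hk1 hk2

end QAux

/-- The stabilizer `{g ∈ SL(3, ℤ) : gᵀ A(1,0,0) g = A(1,0,0)}` is generated by `g₄` and `g₅`,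
and is isomorphic to the dihedral group `D₆` of order 12. -/
theorem stabilizer_of_vertex_Q :
    congrStab A100 = Subgroup.closure {g₄, g₅} ∧
    Nonempty (congrStab A100 ≃* DihedralGroup 6) ∧
    Nat.card (congrStab A100) = 12 := by
  have h2 : congrStab A100 = QAux.f.range :=
    le_antisymm QAux.stab_le_range (QAux.range_le_closure.trans QAux.closure_le_stab)
  have h1 : congrStab A100 = Subgroup.closure {g₄, g₅} :=
    le_antisymm (QAux.stab_le_range.trans QAux.range_le_closure) QAux.closure_le_stab
  have iso : congrStab A100 ≃* DihedralGroup 6 :=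
    (MulEquiv.subgroupCongr h2).trans (MonoidHom.ofInjective QAux.finj).symm
  refine ⟨h1, ⟨iso⟩, ?_⟩
  rw [Nat.card_congr iso.toEquiv, DihedralGroup.nat_card]
end

section
/- The stabilizer in SL(3,ℤ) of the positive definite matrix A(1,1,1) = [[2,1,1],[1,2,1],[1,1,2]], namely {g ∈ SL(3,ℤ) : gᵀ·A(1,1,1)·g = A(1,1,1)}, is isomorphic to the symmetric group S₄ on four letters (in particular it has order 24). -/
open Matrix

/-- The matrix `A(1,1,1)` representing the vertex `M` of Soulé's fundamental domain. -/
def A111 : Matrix (Fin 3) (Fin 3) ℤ := !![2, 1, 1; 1, 2, 1; 1, 1, 2]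

namespace StabAux

def dotA (u v : Fin 3 → ℤ) : ℤ :=
  2*u 0*v 0 + 2*u 1*v 1 + 2*u 2*v 2 + u 0*v 1 + u 1*v 0 + u 0*v 2 + u 2*v 0 + u 1*v 2 + u 2*v 1

lemma congr_entry (g : Matrix (Fin 3) (Fin 3) ℤ) (i j : Fin 3) :
    (gᵀ * A111 * g) i j = dotA (fun k => g k i) (fun k => g k j) := by
  simp [Matrix.mul_apply, Fin.sum_univ_three, A111, dotA, transpose_apply]
  ring

lemma entry_bound (g : Matrix (Fin 3) (Fin 3) ℤ) (hg : gᵀ * A111 * g = A111) (i j : Fin 3) :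
    -1 ≤ g i j ∧ g i j ≤ 1 := by
  have h := congr_entry g j j
  rw [hg] at h
  have hA : A111 j j = 2 := by fin_cases j <;> decide
  rw [hA] at h
  set a := g 0 j; set b := g 1 j; set c := g 2 j
  have h' : (a + b + c)^2 + a^2 + b^2 + c^2 = 2 := by simp only [dotA] at h; ring_nf; ring_nf at h; linarith
  have ha : -1 ≤ a ∧ a ≤ 1 :=
    ⟨by nlinarith [sq_nonneg (a+b+c), sq_nonneg b, sq_nonneg c, sq_nonneg (a+1)],
     by nlinarith [sq_nonneg (a+b+c), sq_nonneg b, sq_nonneg c, sq_nonneg (a-1)]⟩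
  have hb : -1 ≤ b ∧ b ≤ 1 :=
    ⟨by nlinarith [sq_nonneg (a+b+c), sq_nonneg a, sq_nonneg c, sq_nonneg (b+1)],
     by nlinarith [sq_nonneg (a+b+c), sq_nonneg a, sq_nonneg c, sq_nonneg (b-1)]⟩
  have hc : -1 ≤ c ∧ c ≤ 1 :=
    ⟨by nlinarith [sq_nonneg (a+b+c), sq_nonneg a, sq_nonneg b, sq_nonneg (c+1)],
     by nlinarith [sq_nonneg (a+b+c), sq_nonneg a, sq_nonneg b, sq_nonneg (c-1)]⟩
  fin_cases i
  · exact ha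
  · exact hb
  · exact hc

def dc (c : Fin 3 → Fin 3) : Fin 3 → ℤ := fun i => (c i : ℤ) - 1

open Fin.NatCast in
def enc (x : ℤ) : Fin 3 := ((x + 1).toNat : Fin 3)

lemma dc_enc {x : ℤ} (h1 : -1 ≤ x) (h2 : x ≤ 1) (c : Fin 3 → ℤ) (i : Fin 3)
    (hc : c i = x) : dc (fun k => enc (c k)) i = x := by
  simp only [dc, enc, hc]
  interval_cases x <;> decide

abbrev Cset := {c : Fin 3 → Fin 3 // dotA (dc c) (dc c) = 2}

abbrev Tset := {v : Cset × Cset × Cset //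
  dotA (dc v.1.1) (dc v.2.1.1) = 1 ∧ dotA (dc v.1.1) (dc v.2.2.1) = 1 ∧
  dotA (dc v.2.1.1) (dc v.2.2.1) = 1 ∧
  (Matrix.of fun i j => ![dc v.1.1, dc v.2.1.1, dc v.2.2.1] j i).det = 1}

set_option maxRecDepth 40000 in
set_option maxHeartbeats 4000000 in
lemma card_Tset : Fintype.card Tset = 24 := by decide

def pm (σ : Equiv.Perm (Fin 4)) : Matrix (Fin 3) (Fin 3) ℤ :=
  Matrix.of fun i j => (Equiv.Perm.sign σ : ℤ) *
    ((if σ j.succ = i.succ then 1 else 0) - (if σ 0 = i.succ then 1 else 0))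

lemma pm_det : ∀ σ : Equiv.Perm (Fin 4), (pm σ).det = 1 := by decide
lemma pm_stab : ∀ σ : Equiv.Perm (Fin 4), (pm σ)ᵀ * A111 * pm σ = A111 := by decide
lemma pm_inj : ∀ σ : Equiv.Perm (Fin 4), pm σ = 1 → σ = 1 := by decide
lemma pm_one : pm 1 = 1 := by decide
set_option maxHeartbeats 8000000 in
lemma pm_mul : ∀ σ τ : Equiv.Perm (Fin 4), pm (σ * τ) = pm σ * pm τ := by decide

end StabAux

namespace StabAux

lemma hg_mat (g : ↥(congrStab A111)) :
    ((g : SL3) : Matrix (Fin 3) (Fin 3) ℤ)ᵀ * A111 * ((g : SL3) : Matrix (Fin 3) (Fin 3) ℤ) = A111 :=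
  g.2

def colsOf (g : ↥(congrStab A111)) : Fin 3 → (Fin 3 → Fin 3) :=
  fun j i => enc (((g : SL3) : Matrix (Fin 3) (Fin 3) ℤ) i j)

lemma dc_colsOf (g : ↥(congrStab A111)) (j : Fin 3) :
    dc (colsOf g j) = fun i => ((g : SL3) : Matrix (Fin 3) (Fin 3) ℤ) i j := by
  funext i
  exact dc_enc (entry_bound _ (hg_mat g) i j).1 (entry_bound _ (hg_mat g) i j).2 _ i rfl

lemma dot_cols (g : ↥(congrStab A111)) (i j : Fin 3) :
    dotA (dc (colsOf g i)) (dc (colsOf g j)) = A111 i j := by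
  rw [dc_colsOf, dc_colsOf, ← congr_entry, hg_mat]

def E (g : ↥(congrStab A111)) : Tset :=
  ⟨(⟨colsOf g 0, by rw [dot_cols]; decide⟩,
    ⟨colsOf g 1, by rw [dot_cols]; decide⟩,
    ⟨colsOf g 2, by rw [dot_cols]; decide⟩), by
    refine ⟨by rw [dot_cols]; decide, by rw [dot_cols]; decide, by rw [dot_cols]; decide, ?_⟩
    have hm : (Matrix.of fun i j => ![dc (colsOf g 0), dc (colsOf g 1), dc (colsOf g 2)] j i)
        = ((g : SL3) : Matrix (Fin 3) (Fin 3) ℤ) := by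
      ext i j
      fin_cases j <;> simp [Matrix.of_apply, dc_colsOf]
    rw [hm]
    exact (g : SL3).2⟩

lemma E_inj : Function.Injective E := by
  intro g g' h
  have hcols : ∀ j : Fin 3, colsOf g j = colsOf g' j := by
    intro j
    fin_cases j
    · exact congrArg (fun t : Tset => t.1.1.1) h
    · exact congrArg (fun t : Tset => t.1.2.1.1) h
    · exact congrArg (fun t : Tset => t.1.2.2.1) h
  apply Subtype.ext
  apply Subtype.ext
  ext i j
  have h2 := congrFun (congrArg dc (hcols j)) i
  simp only [dc_colsOf] at h2
  exact h2

noncomputable instance : Fintype ↥(congrStab A111) := Fintype.ofInjective E E_inj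

def φ : Equiv.Perm (Fin 4) →* ↥(congrStab A111) where
  toFun σ := ⟨⟨pm σ, pm_det σ⟩, pm_stab σ⟩
  map_one' := Subtype.ext (Subtype.ext pm_one)
  map_mul' σ τ := Subtype.ext (Subtype.ext (pm_mul σ τ))

lemma φ_inj : Function.Injective φ := by
  rw [injective_iff_map_eq_one]
  intro σ hσ
  exact pm_inj σ (congrArg (fun x : ↥(congrStab A111) => ((x : SL3) : Matrix (Fin 3) (Fin 3) ℤ)) hσ)

lemma card_stab : Fintype.card ↥(congrStab A111) = 24 := by
  refine le_antisymm ?_ ?_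
  · exact card_Tset ▸ Fintype.card_le_of_injective E E_inj
  · have h := Fintype.card_le_of_injective φ φ_inj
    simp only [Fintype.card_perm, Fintype.card_fin] at h; exact h

end StabAux

/-- The stabilizer `{g ∈ SL(3, ℤ) : gᵀ A(1,1,1) g = A(1,1,1)}` is isomorphic to the symmetric
group `S₄`; in particular it has order 24. -/
theorem stabilizer_of_vertex_M :
    Nonempty (congrStab A111 ≃* Equiv.Perm (Fin 4)) ∧
    Nat.card (congrStab A111) = 24 := by
  have hbij : Function.Bijective StabAux.φ :=
    (Fintype.bijective_iff_injective_and_card StabAux.φ).2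
      ⟨StabAux.φ_inj, by simp [StabAux.card_stab, Fintype.card_perm]; decide⟩
  exact ⟨⟨(MulEquiv.ofBijective StabAux.φ hbij).symm⟩,
    by rw [Nat.card_eq_fintype_card, StabAux.card_stab]⟩
end

section
/- The stabilizer in SL(3,ℤ) of the positive definite matrix [[4,1,2],[1,4,2],[2,2,4]] (which is twice the matrix A(1,1,1/2)), namely {g ∈ SL(3,ℤ) : gᵀ·[[4,1,2],[1,4,2],[2,2,4]]·g = [[4,1,2],[1,4,2],[2,2,4]]}, is isomorphic to the dihedral group D₄ of order 8. -/
open Matrix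

/-- The matrix `2·A(1,1,1/2)` representing the vertex `N` of Soulé's fundamental domain. -/
def BN : Matrix (Fin 3) (Fin 3) ℤ := !![4, 1, 2; 1, 4, 2; 2, 2, 4]

instance : DecidableEq SL3 := fun _ _ => decidable_of_iff _ Subtype.ext_iff.symm

lemma col_sols (x y z : ℤ) (h : 4*x*x + 4*y*y + 4*z*z + 2*x*y + 4*x*z + 4*y*z = 4) :
    (x = -1 ∧ y = 0 ∧ z = 0) ∨
    (x = -1 ∧ y = 0 ∧ z = 1) ∨
    (x = 0 ∧ y = -1 ∧ z = 0) ∨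
    (x = 0 ∧ y = -1 ∧ z = 1) ∨
    (x = 0 ∧ y = 0 ∧ z = -1) ∨
    (x = 0 ∧ y = 0 ∧ z = 1) ∨
    (x = 0 ∧ y = 1 ∧ z = -1) ∨
    (x = 0 ∧ y = 1 ∧ z = 0) ∨
    (x = 1 ∧ y = 0 ∧ z = -1) ∨
    (x = 1 ∧ y = 0 ∧ z = 0) := by
  have hx1 : x ≤ 1 := by nlinarith [sq_nonneg (x+y+z), sq_nonneg z, sq_nonneg (2*y-x), sq_nonneg (x-2)]
  have hx2 : -1 ≤ x := by nlinarith [sq_nonneg (x+y+z), sq_nonneg z, sq_nonneg (2*y-x), sq_nonneg (x+2)]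
  have hy1 : y ≤ 1 := by nlinarith [sq_nonneg (x+y+z), sq_nonneg z, sq_nonneg (2*x-y), sq_nonneg (y-2)]
  have hy2 : -1 ≤ y := by nlinarith [sq_nonneg (x+y+z), sq_nonneg z, sq_nonneg (2*x-y), sq_nonneg (y+2)]
  have hz1 : z ≤ 1 := by nlinarith [sq_nonneg (x+y+z), sq_nonneg (2*x-y), sq_nonneg y, sq_nonneg (z-2)]
  have hz2 : -1 ≤ z := by nlinarith [sq_nonneg (x+y+z), sq_nonneg (2*x-y), sq_nonneg y, sq_nonneg (z+2)]
  interval_cases x <;> interval_cases y <;> interval_cases z <;> omega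

set_option maxHeartbeats 1000000 in
lemma pair_sols (a d g b e h : ℤ)
    (c0 : (a = -1 ∧ d = 0 ∧ g = 0) ∨
    (a = -1 ∧ d = 0 ∧ g = 1) ∨
    (a = 0 ∧ d = -1 ∧ g = 0) ∨
    (a = 0 ∧ d = -1 ∧ g = 1) ∨
    (a = 0 ∧ d = 0 ∧ g = -1) ∨
    (a = 0 ∧ d = 0 ∧ g = 1) ∨
    (a = 0 ∧ d = 1 ∧ g = -1) ∨
    (a = 0 ∧ d = 1 ∧ g = 0) ∨
    (a = 1 ∧ d = 0 ∧ g = -1) ∨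
    (a = 1 ∧ d = 0 ∧ g = 0))
    (c1 : (b = -1 ∧ e = 0 ∧ h = 0) ∨
    (b = -1 ∧ e = 0 ∧ h = 1) ∨
    (b = 0 ∧ e = -1 ∧ h = 0) ∨
    (b = 0 ∧ e = -1 ∧ h = 1) ∨
    (b = 0 ∧ e = 0 ∧ h = -1) ∨
    (b = 0 ∧ e = 0 ∧ h = 1) ∨
    (b = 0 ∧ e = 1 ∧ h = -1) ∨
    (b = 0 ∧ e = 1 ∧ h = 0) ∨
    (b = 1 ∧ e = 0 ∧ h = -1) ∨
    (b = 1 ∧ e = 0 ∧ h = 0))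
    (h01 : 4*a*b + 4*d*e + 4*g*h + a*e + d*b + 2*a*h + 2*g*b + 2*d*h + 2*g*e = 1) :
    (a = -1 ∧ d = 0 ∧ g = 0 ∧ b = 0 ∧ e = -1 ∧ h = 0) ∨
    (a = -1 ∧ d = 0 ∧ g = 0 ∧ b = 0 ∧ e = 1 ∧ h = -1) ∨
    (a = -1 ∧ d = 0 ∧ g = 1 ∧ b = 0 ∧ e = -1 ∧ h = 1) ∨
    (a = -1 ∧ d = 0 ∧ g = 1 ∧ b = 0 ∧ e = 1 ∧ h = 0) ∨
    (a = 0 ∧ d = -1 ∧ g = 0 ∧ b = -1 ∧ e = 0 ∧ h = 0) ∨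
    (a = 0 ∧ d = -1 ∧ g = 0 ∧ b = 1 ∧ e = 0 ∧ h = -1) ∨
    (a = 0 ∧ d = -1 ∧ g = 1 ∧ b = -1 ∧ e = 0 ∧ h = 1) ∨
    (a = 0 ∧ d = -1 ∧ g = 1 ∧ b = 1 ∧ e = 0 ∧ h = 0) ∨
    (a = 0 ∧ d = 1 ∧ g = -1 ∧ b = -1 ∧ e = 0 ∧ h = 0) ∨
    (a = 0 ∧ d = 1 ∧ g = -1 ∧ b = 1 ∧ e = 0 ∧ h = -1) ∨
    (a = 0 ∧ d = 1 ∧ g = 0 ∧ b = -1 ∧ e = 0 ∧ h = 1) ∨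
    (a = 0 ∧ d = 1 ∧ g = 0 ∧ b = 1 ∧ e = 0 ∧ h = 0) ∨
    (a = 1 ∧ d = 0 ∧ g = -1 ∧ b = 0 ∧ e = -1 ∧ h = 0) ∨
    (a = 1 ∧ d = 0 ∧ g = -1 ∧ b = 0 ∧ e = 1 ∧ h = -1) ∨
    (a = 1 ∧ d = 0 ∧ g = 0 ∧ b = 0 ∧ e = -1 ∧ h = 1) ∨
    (a = 1 ∧ d = 0 ∧ g = 0 ∧ b = 0 ∧ e = 1 ∧ h = 0) := by
  rcases c0 with ⟨rfl,rfl,rfl⟩|⟨rfl,rfl,rfl⟩|⟨rfl,rfl,rfl⟩|⟨rfl,rfl,rfl⟩|⟨rfl,rfl,rfl⟩|⟨rfl,rfl,rfl⟩|⟨rfl,rfl,rfl⟩|⟨rfl,rfl,rfl⟩|⟨rfl,rfl,rfl⟩|⟨rfl,rfl,rfl⟩ <;> rcases c1 with ⟨rfl,rfl,rfl⟩|⟨rfl,rfl,rfl⟩|⟨rfl,rfl,rfl⟩|⟨rfl,rfl,rfl⟩|⟨rfl,rfl,rfl⟩|⟨rfl,rfl,rfl⟩|⟨rfl,rfl,rfl⟩|⟨rfl,rfl,rfl⟩|⟨rfl,rfl,rfl⟩|⟨rfl,rfl,rfl⟩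 <;> (norm_num at h01 <;> norm_num)

set_option maxHeartbeats 1000000 in
lemma entries_sols (a b c d e f g h i : ℤ)
    (h0 : 4*a*a + 4*d*d + 4*g*g + 2*a*d + 4*a*g + 4*d*g = 4)
    (h1 : 4*b*b + 4*e*e + 4*h*h + 2*b*e + 4*b*h + 4*e*h = 4)
    (h2 : 4*c*c + 4*f*f + 4*i*i + 2*c*f + 4*c*i + 4*f*i = 4)
    (h01 : 4*a*b + 4*d*e + 4*g*h + a*e + d*b + 2*a*h + 2*g*b + 2*d*h + 2*g*e = 1)
    (h02 : 4*a*c + 4*d*f + 4*g*i + a*f + d*c + 2*a*i + 2*g*c + 2*d*i + 2*g*f = 2)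
    (h12 : 4*b*c + 4*e*f + 4*h*i + b*f + e*c + 2*b*i + 2*h*c + 2*e*i + 2*h*f = 2)
    (hdet : a*(e*i - f*h) - b*(d*i - f*g) + c*(d*h - e*g) = 1) :
    (a = -1 ∧ b = 0 ∧ c = 0 ∧ d = 0 ∧ e = -1 ∧ f = 0 ∧ g = 1 ∧ h = 1 ∧ i = 1) ∨
    (a = -1 ∧ b = 0 ∧ c = 0 ∧ d = 0 ∧ e = 1 ∧ f = 0 ∧ g = 0 ∧ h = -1 ∧ i = -1) ∨
    (a = 0 ∧ b = -1 ∧ c = 0 ∧ d = -1 ∧ e = 0 ∧ f = 0 ∧ g = 0 ∧ h = 0 ∧ i = -1) ∨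
    (a = 0 ∧ b = -1 ∧ c = 0 ∧ d = 1 ∧ e = 0 ∧ f = 0 ∧ g = 0 ∧ h = 1 ∧ i = 1) ∨
    (a = 0 ∧ b = 1 ∧ c = 0 ∧ d = -1 ∧ e = 0 ∧ f = 0 ∧ g = 1 ∧ h = 0 ∧ i = 1) ∨
    (a = 0 ∧ b = 1 ∧ c = 0 ∧ d = 1 ∧ e = 0 ∧ f = 0 ∧ g = -1 ∧ h = -1 ∧ i = -1) ∨
    (a = 1 ∧ b = 0 ∧ c = 0 ∧ d = 0 ∧ e = -1 ∧ f = 0 ∧ g = -1 ∧ h = 0 ∧ i = -1) ∨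
    (a = 1 ∧ b = 0 ∧ c = 0 ∧ d = 0 ∧ e = 1 ∧ f = 0 ∧ g = 0 ∧ h = 0 ∧ i = 1) := by
  have c0 := col_sols a d g h0
  have c1 := col_sols b e h h1
  have c2 := col_sols c f i h2
  have p := pair_sols a d g b e h c0 c1 h01
  clear c0 c1 h0 h1 h2 h01
  rcases p with ⟨rfl,rfl,rfl,rfl,rfl,rfl⟩|⟨rfl,rfl,rfl,rfl,rfl,rfl⟩|⟨rfl,rfl,rfl,rfl,rfl,rfl⟩|⟨rfl,rfl,rfl,rfl,rfl,rfl⟩|⟨rfl,rfl,rfl,rfl,rfl,rfl⟩|⟨rfl,rfl,rfl,rfl,rfl,rfl⟩|⟨rfl,rfl,rfl,rfl,rfl,rfl⟩|⟨rfl,rfl,rfl,rfl,rfl,rfl⟩|⟨rfl,rfl,rfl,rfl,rfl,rfl⟩|⟨rfl,rfl,rfl,rfl,rfl,rfl⟩|⟨rfl,rfl,rfl,rfl,rfl,rfl⟩|⟨rfl,rfl,rfl,rfl,rfl,rfl⟩|⟨rfl,rfl,rfl,rfl,rfl,rfl⟩|⟨rfl,rfl,rfl,rfl,rfl,rfl⟩|⟨rfl,rfl,rfl,rfl,rfl,rfl⟩|⟨rfl,rfl,rfl,rfl,rfl,rfl⟩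 <;> rcases c2 with ⟨rfl,rfl,rfl⟩|⟨rfl,rfl,rfl⟩|⟨rfl,rfl,rfl⟩|⟨rfl,rfl,rfl⟩|⟨rfl,rfl,rfl⟩|⟨rfl,rfl,rfl⟩|⟨rfl,rfl,rfl⟩|⟨rfl,rfl,rfl⟩|⟨rfl,rfl,rfl⟩|⟨rfl,rfl,rfl⟩ <;> (norm_num at h02 <;> norm_num at h12 <;> norm_num at hdet <;> norm_num)

def Rm : SL3 := ⟨!![0,-1,0; 1,0,0; 0,1,1], by rw [Matrix.det_fin_three]; decide⟩
def Sm : SL3 := ⟨!![0,1,0; 1,0,0; -1,-1,-1], by rw [Matrix.det_fin_three]; decide⟩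

lemma hRmem : Rm ∈ congrStab BN := show _ᵀ * BN * _ = BN by decide
lemma hSmem : Sm ∈ congrStab BN := show _ᵀ * BN * _ = BN by decide

set_option maxHeartbeats 1000000 in
lemma stab_cases (u : SL3) (hu : u ∈ congrStab BN) :
    u = 1 ∨ u = Rm ∨ u = Rm^2 ∨ u = Rm^3 ∨ u = Sm ∨ u = Sm*Rm ∨ u = Sm*Rm^2 ∨ u = Sm*Rm^3 := by
  have hM : (u : Matrix (Fin 3) (Fin 3) ℤ)ᵀ * BN * (u : Matrix (Fin 3) (Fin 3) ℤ) = BN := hu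
  have e : ∀ i j, ((u : Matrix (Fin 3) (Fin 3) ℤ)ᵀ * BN * (u : Matrix (Fin 3) (Fin 3) ℤ)) i j = BN i j :=
    fun i j => by rw [hM]
  have e00 := e 0 0
  have e11 := e 1 1
  have e22 := e 2 2
  have e01 := e 0 1
  have e02 := e 0 2
  have e12 := e 1 2
  simp [Matrix.mul_apply, Matrix.transpose_apply, BN, Fin.sum_univ_three] at e00 e11 e22 e01 e02 e12
  have hdet0 : Matrix.det (u : Matrix (Fin 3) (Fin 3) ℤ) = 1 := u.2
  rw [Matrix.det_fin_three] at hdet0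
  set M : Matrix (Fin 3) (Fin 3) ℤ := (u : Matrix (Fin 3) (Fin 3) ℤ) with hMdef
  have key := entries_sols (M 0 0) (M 0 1) (M 0 2) (M 1 0) (M 1 1) (M 1 2) (M 2 0) (M 2 1) (M 2 2)
    (by linear_combination e00) (by linear_combination e11) (by linear_combination e22)
    (by linear_combination e01) (by linear_combination e02) (by linear_combination e12)
    (by linear_combination hdet0)
  clear e e00 e11 e22 e01 e02 e12 hdet0 hM hu
  rcases key with h9|h9|h9|h9|h9|h9|h9|h9
  · obtain ⟨h1,h2,h3,h4,h5,h6,h7,h8,h9⟩ := h9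
    have p : u = Rm^2 := Subtype.ext (by
      show M = _
      ext i j
      fin_cases i <;> fin_cases j <;> simp_all <;> decide)
    exact Or.inr (Or.inr (Or.inl p))
  · obtain ⟨h1,h2,h3,h4,h5,h6,h7,h8,h9⟩ := h9
    have p : u = Sm*Rm^3 := Subtype.ext (by
      show M = _
      ext i j
      fin_cases i <;> fin_cases j <;> simp_all <;> decide)
    exact Or.inr (Or.inr (Or.inr (Or.inr (Or.inr (Or.inr (Or.inr p))))))
  · obtain ⟨h1,h2,h3,h4,h5,h6,h7,h8,h9⟩ := h9
    have p : u = Sm*Rm^2 := Subtype.ext (by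
      show M = _
      ext i j
      fin_cases i <;> fin_cases j <;> simp_all <;> decide)
    exact Or.inr (Or.inr (Or.inr (Or.inr (Or.inr (Or.inr (Or.inl p))))))
  · obtain ⟨h1,h2,h3,h4,h5,h6,h7,h8,h9⟩ := h9
    have p : u = Rm := Subtype.ext (by
      show M = _
      ext i j
      fin_cases i <;> fin_cases j <;> simp_all <;> decide)
    exact Or.inr (Or.inl p)
  · obtain ⟨h1,h2,h3,h4,h5,h6,h7,h8,h9⟩ := h9
    have p : u = Rm^3 := Subtype.ext (by
      show M = _
      ext i j
      fin_cases i <;> fin_cases j <;> simp_all <;> decide)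
    exact Or.inr (Or.inr (Or.inr (Or.inl p)))
  · obtain ⟨h1,h2,h3,h4,h5,h6,h7,h8,h9⟩ := h9
    have p : u = Sm := Subtype.ext (by
      show M = _
      ext i j
      fin_cases i <;> fin_cases j <;> simp_all <;> decide)
    exact Or.inr (Or.inr (Or.inr (Or.inr (Or.inl p))))
  · obtain ⟨h1,h2,h3,h4,h5,h6,h7,h8,h9⟩ := h9
    have p : u = Sm*Rm := Subtype.ext (by
      show M = _
      ext i j
      fin_cases i <;> fin_cases j <;> simp_all <;> decide)
    exact Or.inr (Or.inr (Or.inr (Or.inr (Or.inr (Or.inl p)))))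
  · obtain ⟨h1,h2,h3,h4,h5,h6,h7,h8,h9⟩ := h9
    have p : u = (1 : SL3) := Subtype.ext (by
      show M = _
      ext i j
      fin_cases i <;> fin_cases j <;> simp_all <;> decide)
    exact Or.inl p

def phiFun : DihedralGroup 4 → congrStab BN
  | .r i => ⟨Rm ^ i.val, pow_mem hRmem i.val⟩
  | .sr i => ⟨Sm * Rm ^ i.val, mul_mem hSmem (pow_mem hRmem i.val)⟩

set_option maxHeartbeats 1000000 in
lemma phi_mul : ∀ x y : DihedralGroup 4, phiFun (x * y) = phiFun x * phiFun y := by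
  rintro (i | i) (j | j) <;> fin_cases i <;> fin_cases j <;>
    exact Subtype.ext (Subtype.ext (by decide))

set_option maxHeartbeats 1000000 in
lemma phi_inj : Function.Injective phiFun := by
  intro x y hxy
  have h := congrArg (fun t : congrStab BN => ((t : SL3) : Matrix (Fin 3) (Fin 3) ℤ)) hxy
  rcases x with i | i <;> rcases y with j | j <;> fin_cases i <;> fin_cases j <;>
    first | rfl | exact absurd h (by decide)

lemma phi_surj : Function.Surjective phiFun := by
  rintro ⟨u, hu⟩
  rcases stab_cases u hu with rfl | rfl | rfl | rfl | rfl | rfl | rfl | rfl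
  · exact ⟨.r 0, Subtype.ext (show (phiFun (.r 0) : SL3) = 1 from by decide)⟩
  · exact ⟨.r 1, Subtype.ext (show (phiFun (.r 1) : SL3) = Rm from by decide)⟩
  · exact ⟨.r 2, Subtype.ext (show (phiFun (.r 2) : SL3) = Rm ^ 2 from by decide)⟩
  · exact ⟨.r 3, Subtype.ext (show (phiFun (.r 3) : SL3) = Rm ^ 3 from by decide)⟩
  · exact ⟨.sr 0, Subtype.ext (show (phiFun (.sr 0) : SL3) = Sm from by decide)⟩
  · exact ⟨.sr 1, Subtype.ext (show (phiFun (.sr 1) : SL3) = Sm * Rm from by decide)⟩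
  · exact ⟨.sr 2, Subtype.ext (show (phiFun (.sr 2) : SL3) = Sm * Rm ^ 2 from by decide)⟩
  · exact ⟨.sr 3, Subtype.ext (show (phiFun (.sr 3) : SL3) = Sm * Rm ^ 3 from by decide)⟩

noncomputable def phiEquiv : DihedralGroup 4 ≃* congrStab BN :=
  MulEquiv.ofBijective (MonoidHom.mk' phiFun phi_mul) ⟨phi_inj, phi_surj⟩


/-- The stabilizer `{g ∈ SL(3, ℤ) : gᵀ [[4,1,2],[1,4,2],[2,2,4]] g = [[4,1,2],[1,4,2],[2,2,4]]}`
is isomorphic to the dihedral group `D₄` of order 8. -/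
theorem stabilizer_of_vertex_N :
    Nonempty (congrStab BN ≃* DihedralGroup 4) ∧
    Nat.card (congrStab BN) = 8 := by
  constructor
  · exact ⟨phiEquiv.symm⟩
  · have h := Nat.card_congr phiEquiv.toEquiv
    rw [← h, Nat.card_eq_fintype_card, DihedralGroup.card]
end

section
/- The stabilizer in SL(3,ℤ) of the positive definite matrix [[6,−2,2],[−2,6,2],[2,2,6]] (which is three times the matrix A(2/3,2/3,−2/3)), namely {g ∈ SL(3,ℤ) : gᵀ·[[6,−2,2],[−2,6,2],[2,2,6]]·g = [[6,−2,2],[−2,6,2],[2,2,6]]}, is isomorphic to the symmetric group S₄ on four letters (in particular it has order 24). -/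
open Matrix

/-- The matrix `3·A(2/3,2/3,-2/3)` representing the vertex `P` of Soulé's fundamental domain. -/
def BP : Matrix (Fin 3) (Fin 3) ℤ := !![6, -2, 2; -2, 6, 2; 2, 2, 6]

/-!
The vectors `q₀ = e₁`, `q₁ = e₂`, `q₂ = -e₃`, `q₃ = -e₁ - e₂ + e₃` (the columns of `tetra`) sum
to zero and have `BP`-Gram matrix `tetraGram`: `6` on the diagonal and `-2` off it. Together with
their negatives they are the only vectors of `BP`-norm `6`. Permuting the `qᵢ` gives a
representation `ρ` of `S₄` by isometries of `BP`, and `σ ↦ det ρ(σ) • ρ(σ)` maps it into `SL(3, ℤ)`;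
it is injective because `6 ≠ ±(-2)`. Conversely, an element of the stabilizer permutes the eight
vectors `±qᵢ`; comparing Gram matrices shows that it sends `qᵢ ↦ ε q_{σ i}` with one sign `ε`, so
it equals `ε ρ(σ)`, and `det = 1` forces `ε = det ρ(σ)`.
-/

open Equiv

namespace Matrix.GeneralLinearGroup

variable {n : Type*} [Fintype n] [DecidableEq n]

lemma det_det_smul_self (hn : Odd (Fintype.card n)) (g : GL n ℤ) :
    ((det g : ℤ) • (g : Matrix n n ℤ)).det = 1 := by
  obtain ⟨k, hk⟩ := hn
  rw [Matrix.det_smul, ← val_det_apply, ← Units.val_pow_eq_pow_val, ← Units.val_mul, hk,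
    ← pow_succ, show 2 * k + 1 + 1 = 2 * (k + 1) by ring, pow_mul, Int.units_sq, one_pow,
    Units.val_one]

def toSpecialLinearOfOdd (hn : Odd (Fintype.card n)) : GL n ℤ →* SpecialLinearGroup n ℤ where
  toFun g := ⟨(det g : ℤ) • (g : Matrix n n ℤ), det_det_smul_self hn g⟩
  map_one' := by ext1; simp
  map_mul' g h := Subtype.ext <| by
    simp only [map_mul, Units.val_mul]
    exact (smul_mul_smul_comm _ _ _ _).symm

end Matrix.GeneralLinearGroup

namespace Matrix

lemma transpose_mul_mul_apply {m n α : Type*} [Fintype m] [NonUnitalSemiring α]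
    (X : Matrix m n α) (B : Matrix m m α) (i j : n) :
    (Xᵀ * B * X) i j = Xᵀ i ⬝ᵥ B *ᵥ Xᵀ j := by
  rw [Matrix.mul_assoc]
  simp [mul_apply, dotProduct, mulVec]

variable {m n R : Type*} [Fintype n] [DecidableEq n] [CommRing R] (σ : Perm n)

lemma mul_permMatrixHom (M : Matrix m n R) :
    M * (permMatrixHom σ : Matrix n n R) = M.submatrix id σ := by
  rw [permMatrixHom_apply, PEquiv.mul_toMatrix_toPEquiv]
  rfl

lemma permMatrixHom_transpose_mul (M : Matrix n m R) :
    (permMatrixHom σ : Matrix n n R)ᵀ * M = M.submatrix σ id := by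
  simp [PEquiv.toMatrix_toPEquiv_mul]

lemma permMatrixHom_mulVec_one : (permMatrixHom σ : Matrix n n R) *ᵥ 1 = 1 := by
  simp [permMatrix_mulVec]

end Matrix

def tetra : Matrix (Fin 3) (Fin 4) ℤ := !![1, 0, 0, -1; 0, 1, 0, -1; 0, 0, -1, 1]

def tetraSection : Matrix (Fin 4) (Fin 3) ℤ := !![1, 0, 0; 0, 1, 0; 0, 0, -1; 0, 0, 0]

def tetraGram : Matrix (Fin 4) (Fin 4) ℤ := of fun i j => if i = j then 6 else -2

lemma tetra_mul_tetraSection : tetra * tetraSection = 1 := by decide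

lemma tetraSection_mul_tetra : tetraSection * tetra = 1 - vecMulVec 1 (Pi.single 3 1) := by decide

lemma tetra_mulVec_one : tetra *ᵥ 1 = 0 := by decide

lemma tetra_transpose_mul_BP_mul_tetra : tetraᵀ * BP * tetra = tetraGram := by decide

lemma tetraGram_submatrix (σ : Perm (Fin 4)) : tetraGram.submatrix σ σ = tetraGram := by
  ext i j
  simp [tetraGram, σ.injective.eq_iff]

lemma BP_eq_tetraSection_gram : BP = tetraSectionᵀ * tetraGram * tetraSection := by
  calc BP = (tetra * tetraSection)ᵀ * BP * (tetra * tetraSection) := by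
        rw [tetra_mul_tetraSection, transpose_one, Matrix.one_mul, Matrix.mul_one]
    _ = tetraSectionᵀ * (tetraᵀ * BP * tetra) * tetraSection := by
        simp only [transpose_mul, Matrix.mul_assoc]
    _ = tetraSectionᵀ * tetraGram * tetraSection := by rw [tetra_transpose_mul_BP_mul_tetra]

def tetraRep (σ : Perm (Fin 4)) : Matrix (Fin 3) (Fin 3) ℤ :=
  tetra * (permMatrixHom σ : Matrix (Fin 4) (Fin 4) ℤ) * tetraSection

-- `tetraSection * tetra - 1` only involves the relation `∑ qᵢ = 0`, which permutations preserve
lemma tetraRep_mul_tetra (σ : Perm (Fin 4)) :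
    tetraRep σ * tetra = tetra * (permMatrixHom σ : Matrix (Fin 4) (Fin 4) ℤ) := by
  rw [tetraRep, Matrix.mul_assoc _ tetraSection, tetraSection_mul_tetra, Matrix.mul_sub,
    Matrix.mul_one, mul_vecMulVec, ← mulVec_mulVec, permMatrixHom_mulVec_one,
    tetra_mulVec_one, zero_vecMulVec, sub_zero]

def tetraRepHom : Perm (Fin 4) →* Matrix (Fin 3) (Fin 3) ℤ where
  toFun := tetraRep
  map_one' := by simp [tetraRep, tetra_mul_tetraSection]
  map_mul' σ τ := by
    rw [tetraRep, map_mul, ← Matrix.mul_assoc, ← tetraRep_mul_tetra, tetraRep, tetraRep]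
    simp only [Matrix.mul_assoc]

lemma tetraRep_transpose_mul_BP_mul (σ : Perm (Fin 4)) :
    (tetraRep σ)ᵀ * BP * tetraRep σ = BP := by
  calc (tetraRep σ)ᵀ * BP * tetraRep σ
      = tetraSectionᵀ * ((permMatrixHom σ : Matrix (Fin 4) (Fin 4) ℤ)ᵀ *
          (tetraᵀ * BP * tetra) * permMatrixHom σ) * tetraSection := by
        simp only [tetraRep, transpose_mul, Matrix.mul_assoc]
    _ = BP := by
        rw [tetra_transpose_mul_BP_mul_tetra, permMatrixHom_transpose_mul, mul_permMatrixHom,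
          submatrix_submatrix, Function.comp_id, Function.id_comp, tetraGram_submatrix,
          BP_eq_tetraSection_gram]

lemma det_tetraRep_mul_self (σ : Perm (Fin 4)) : (tetraRep σ).det * (tetraRep σ).det = 1 :=
  Int.isUnit_mul_self <| (isUnit_iff_isUnit_det _).mp <| (Group.isUnit σ).map tetraRepHom

def stabHom : Perm (Fin 4) →* SL3 :=
  (GeneralLinearGroup.toSpecialLinearOfOdd (by decide)).comp tetraRepHom.toHomUnits

lemma coe_stabHom (σ : Perm (Fin 4)) :
    (stabHom σ : Matrix (Fin 3) (Fin 3) ℤ) = (tetraRep σ).det • tetraRep σ :=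
  rfl

lemma stabHom_mem_congrStab (σ : Perm (Fin 4)) : stabHom σ ∈ congrStab BP := by
  change (stabHom σ : Matrix (Fin 3) (Fin 3) ℤ)ᵀ * BP * stabHom σ = BP
  simp only [coe_stabHom, transpose_smul, Matrix.smul_mul, Matrix.mul_smul, smul_smul,
    det_tetraRep_mul_self, one_smul, tetraRep_transpose_mul_BP_mul]

lemma stabHom_injective : Function.Injective stabHom := by
  refine (injective_iff_map_eq_one _).mpr fun σ hσ => Equiv.ext fun j => ?_
  have h1 : (stabHom σ : Matrix (Fin 3) (Fin 3) ℤ) = 1 := by rw [hσ]; rfl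
  have hG : (tetraRep σ).det • tetraGram.submatrix id σ = tetraGram := by
    calc (tetraRep σ).det • tetraGram.submatrix id σ
        = tetraᵀ * BP * (stabHom σ : Matrix (Fin 3) (Fin 3) ℤ) * tetra := by
          rw [coe_stabHom, Matrix.mul_smul, Matrix.smul_mul, Matrix.mul_assoc _ (tetraRep σ),
            tetraRep_mul_tetra, ← Matrix.mul_assoc, tetra_transpose_mul_BP_mul_tetra,
            mul_permMatrixHom]
      _ = tetraGram := by rw [h1, Matrix.mul_one, tetra_transpose_mul_BP_mul_tetra]
  have hjj := congrFun (congrFun hG j) j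
  rw [Perm.one_apply]
  by_contra hne
  simp [tetraGram, Ne.symm hne] at hjj
  nlinarith [det_tetraRep_mul_self σ]

lemma tetra_col_dotProduct_BP_mulVec (a b : Fin 4) :
    tetraᵀ a ⬝ᵥ BP *ᵥ tetraᵀ b = tetraGram a b := by
  rw [← tetra_transpose_mul_BP_mul_tetra, transpose_mul_mul_apply]

lemma exists_eq_tetra_col_or_neg (v : Fin 3 → ℤ) (hv : v ⬝ᵥ BP *ᵥ v = 6) :
    ∃ k, v = tetraᵀ k ∨ v = -tetraᵀ k := by
  obtain ⟨x, y, z, rfl⟩ : ∃ x y z, v = ![x, y, z] :=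
    ⟨v 0, v 1, v 2, by ext i; fin_cases i <;> rfl⟩
  have hq : 2 * (x - y) ^ 2 + 2 * (x + z) ^ 2 + 2 * (y + z) ^ 2 + 2 * x ^ 2 + 2 * y ^ 2
      + 2 * z ^ 2 = 6 := by
    simp [dotProduct, mulVec, Fin.sum_univ_three, BP] at hv
    linear_combination hv
  have hbound (t : ℤ) (ht : t ^ 2 ≤ 3) : -1 ≤ t ∧ t ≤ 1 := by constructor <;> nlinarith
  have := sq_nonneg (x - y); have := sq_nonneg (x + z); have := sq_nonneg (y + z)
  obtain ⟨hx0, hx1⟩ := hbound x (by nlinarith)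
  obtain ⟨hy0, hy1⟩ := hbound y (by nlinarith)
  obtain ⟨hz0, hz1⟩ := hbound z (by nlinarith)
  -- with `tetraᵀ k` instead of the explicit column, `decide` finds no `Decidable` instance
  show ∃ k, ![x, y, z] = (fun i => tetra i k) ∨ ![x, y, z] = -(fun i => tetra i k)
  interval_cases x <;> interval_cases y <;> interval_cases z <;> revert hq <;> decide

lemma exists_eq_units_smul_tetra_mul_permMatrixHom (X : Matrix (Fin 3) (Fin 4) ℤ)
    (hX : Xᵀ * BP * X = tetraGram) :
    ∃ (ε : ℤˣ) (σ : Perm (Fin 4)),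
      X = (ε : ℤ) • (tetra * (permMatrixHom σ : Matrix (Fin 4) (Fin 4) ℤ)) := by
  have hXij (i j : Fin 4) : Xᵀ i ⬝ᵥ BP *ᵥ Xᵀ j = tetraGram i j := by
    rw [← transpose_mul_mul_apply, hX]
  have hcol (k : Fin 4) : ∃ (ε : ℤˣ) (l : Fin 4), Xᵀ k = (ε : ℤ) • tetraᵀ l := by
    obtain ⟨l, h | h⟩ := exists_eq_tetra_col_or_neg (Xᵀ k) (by simp [hXij, tetraGram])
    · exact ⟨1, l, by simp [h]⟩
    · exact ⟨-1, l, by simp [h]⟩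
  choose ε π hπ using hcol
  have hpair (i j : Fin 4) (hij : i ≠ j) :
      ((ε i * ε j : ℤˣ) : ℤ) * tetraGram (π i) (π j) = -2 := by
    have h := hXij i j
    rw [hπ i, hπ j, smul_dotProduct, mulVec_smul, dotProduct_smul,
      tetra_col_dotProduct_BP_mulVec, smul_smul, smul_eq_mul, ← Units.val_mul] at h
    rw [h]
    simp [tetraGram, hij]
  have hπinj : Function.Injective π := by
    intro i j h
    by_contra hij
    have h' := hpair i j hij
    rw [h] at h'
    rcases Int.units_eq_one_or (ε i * ε j) with h1 | h1 <;> simp [h1, tetraGram] at h'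
  have hε (k : Fin 4) : ε k = ε 0 := by
    by_cases hk : k = 0
    · rw [hk]
    have h' := hpair k 0 hk
    rw [tetraGram, of_apply, if_neg (hπinj.ne hk)] at h'
    rw [← mul_right_inj (ε 0), Int.units_mul_self, mul_comm]
    exact Units.ext (by rw [Units.val_one]; linarith)
  refine ⟨ε 0, Equiv.ofBijective π hπinj.bijective_of_finite, ?_⟩
  ext i k
  have h := congrFun (hπ k) i
  rw [hε k] at h
  rw [Matrix.smul_apply, mul_permMatrixHom, submatrix_apply]
  simpa using h

lemma exists_stabHom_eq (g : SL3) (hg : g ∈ congrStab BP) : ∃ σ, stabHom σ = g := by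
  set G : Matrix (Fin 3) (Fin 3) ℤ := (g : Matrix (Fin 3) (Fin 3) ℤ)
  have hG : Gᵀ * BP * G = BP := hg
  have hgram : (G * tetra)ᵀ * BP * (G * tetra) = tetraGram := by
    conv_rhs => rw [← tetra_transpose_mul_BP_mul_tetra, ← hG]
    simp only [transpose_mul, Matrix.mul_assoc]
  obtain ⟨ε, σ, h⟩ := exists_eq_units_smul_tetra_mul_permMatrixHom _ hgram
  have hgε : G = (ε : ℤ) • tetraRep σ := by
    calc G = G * tetra * tetraSection := by
          rw [Matrix.mul_assoc, tetra_mul_tetraSection, Matrix.mul_one]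
      _ = (ε : ℤ) • tetraRep σ := by rw [h, Matrix.smul_mul, tetraRep]
  have hdet : (tetraRep σ).det = ε := by
    have h1 : G.det = 1 := g.2
    rw [hgε, det_smul, Fintype.card_fin] at h1
    rcases Int.units_eq_one_or ε with rfl | rfl <;> simp at h1 ⊢ <;> linarith
  exact ⟨σ, Subtype.ext (by rw [coe_stabHom, hdet]; exact hgε.symm)⟩

/-- The stabilizer `{g ∈ SL(3, ℤ) : gᵀ [[6,-2,2],[-2,6,2],[2,2,6]] g = [[6,-2,2],[-2,6,2],[2,2,6]]}`
is isomorphic to the symmetric group `S₄`; in particular it has order 24. -/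
theorem stabilizer_of_vertex_P :
    Nonempty (congrStab BP ≃* Equiv.Perm (Fin 4)) ∧
    Nat.card (congrStab BP) = 24 := by
  have hrange : stabHom.range = congrStab BP := le_antisymm
    (by rintro _ ⟨σ, rfl⟩; exact stabHom_mem_congrStab σ)
    exists_stabHom_eq
  let e : congrStab BP ≃* Perm (Fin 4) :=
    ((MonoidHom.ofInjective stabHom_injective).trans (MulEquiv.subgroupCongr hrange)).symm
  refine ⟨⟨e⟩, ?_⟩
  rw [Nat.card_congr e.toEquiv, Nat.card_perm, Nat.card_fin]
  rfl
end

section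
/- The subgroup of SL(3,ℤ) consisting of all g with gᵀg = 1 and gᵀ·A(1,0,0)·g = A(1,0,0), where A(1,0,0) = [[2,0,0],[0,2,1],[0,1,2]], is isomorphic to the Klein four group C₂ × C₂ (in particular it has order 4). -/
open Matrix

lemma entries (m : Matrix (Fin 3) (Fin 3) ℤ) (h1 : mᵀ * m = 1)
    (h2 : mᵀ * A100 * m = A100) (hd : m.det = 1) :
    m = !![1,0,0;0,1,0;0,0,1] ∨ m = !![1,0,0;0,-1,0;0,0,-1] ∨
    m = !![-1,0,0;0,0,1;0,1,0] ∨ m = !![-1,0,0;0,0,-1;0,-1,0] := by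
  have hmm : m * mᵀ = 1 := mul_eq_one_comm.mp h1
  have comm : m * A100 = A100 * m := by
    calc m * A100 = m * (mᵀ * A100 * m) := by rw [h2]
      _ = (m * mᵀ) * A100 * m := by simp [Matrix.mul_assoc]
      _ = A100 * m := by rw [hmm, one_mul]
  have key : ∀ i j, (m * A100) i j = (A100 * m) i j := fun i j => by rw [comm]
  have e01 : m 0 2 = 0 := by
    have := key 0 1
    simp [Matrix.mul_apply, Fin.sum_univ_three, A100, Matrix.vecHead, Matrix.vecTail] at this
    linarith
  have e02 : m 0 1 = 0 := by
    have := key 0 2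
    simp [Matrix.mul_apply, Fin.sum_univ_three, A100, Matrix.vecHead, Matrix.vecTail] at this
    linarith
  have e10 : m 2 0 = 0 := by
    have := key 1 0
    simp [Matrix.mul_apply, Fin.sum_univ_three, A100, Matrix.vecHead, Matrix.vecTail] at this
    linarith
  have e20 : m 1 0 = 0 := by
    have := key 2 0
    simp [Matrix.mul_apply, Fin.sum_univ_three, A100, Matrix.vecHead, Matrix.vecTail] at this
    linarith
  have e11 : m 2 1 = m 1 2 := by
    have := key 1 1
    simp [Matrix.mul_apply, Fin.sum_univ_three, A100, Matrix.vecHead, Matrix.vecTail] at this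
    linarith
  have e12 : m 2 2 = m 1 1 := by
    have := key 1 2
    simp [Matrix.mul_apply, Fin.sum_univ_three, A100, Matrix.vecHead, Matrix.vecTail] at this
    linarith
  have k00 : (mᵀ * m) 0 0 = (1 : Matrix (Fin 3) (Fin 3) ℤ) 0 0 := by rw [h1]
  have k11 : (mᵀ * m) 1 1 = (1 : Matrix (Fin 3) (Fin 3) ℤ) 1 1 := by rw [h1]
  have k12 : (mᵀ * m) 1 2 = (1 : Matrix (Fin 3) (Fin 3) ℤ) 1 2 := by rw [h1]
  rw [Matrix.mul_apply] at k00 k11 k12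
  simp [Fin.sum_univ_three, Matrix.one_apply, Matrix.transpose_apply] at k00 k11 k12
  rw [Matrix.det_fin_three] at hd
  simp only [e01, e02, e10, e20, e11, e12] at hd k00 k11 k12
  set a := m 0 0 with ha'
  set p := m 1 1 with hp'
  set q := m 1 2 with hq'
  have hA : a * a = 1 := by linear_combination k00
  have hd' : a * (p * p - q * q) = 1 := by linear_combination hd
  have hK11 : p * p + q * q = 1 := by linear_combination k11
  have hK12 : p * q = 0 := by linarith
  have hfin : ∀ (a' p' q' : ℤ), a = a' → p = p' → q = q' →
      m = !![a', 0, 0; 0, p', q'; 0, q', p'] := by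
    rintro a' p' q' rfl rfl rfl
    ext i j
    fin_cases i <;> fin_cases j <;>
      simp [e01, e02, e10, e20, e11, e12, ha', hp', hq', Matrix.vecHead, Matrix.vecTail]
  rcases mul_eq_zero.mp hK12 with hp0 | hq0
  · -- p = 0, q = ±1, a = -1
    have hq1 : q * q = 1 := by rw [hp0] at hK11; linarith
    have hav : a = -1 := by nlinarith
    rcases Int.isUnit_iff.mp (IsUnit.of_mul_eq_one q hq1) with h | h
    · right; right; left; exact hfin _ _ _ hav hp0 h
    · right; right; right; exact hfin _ _ _ hav hp0 h
  · have hp1 : p * p = 1 := by rw [hq0] at hK11; linarith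
    have hav : a = 1 := by nlinarith
    rcases Int.isUnit_iff.mp (IsUnit.of_mul_eq_one p hp1) with h | h
    · left; exact hfin _ _ _ hav h hq0
    · right; left; exact hfin _ _ _ hav h hq0
def G0 : SL3 := ⟨!![1,0,0;0,1,0;0,0,1], by decide⟩
def G1 : SL3 := ⟨!![1,0,0;0,-1,0;0,0,-1], by decide⟩
def G2 : SL3 := ⟨!![-1,0,0;0,0,1;0,1,0], by decide⟩
def G3 : SL3 := ⟨!![-1,0,0;0,0,-1;0,-1,0], by decide⟩

lemma mem_H_iff (g : SL3) : g ∈ congrStab 1 ⊓ congrStab A100 ↔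
    ((g : Matrix (Fin 3) (Fin 3) ℤ)ᵀ * (g : Matrix (Fin 3) (Fin 3) ℤ) = 1 ∧
      (g : Matrix (Fin 3) (Fin 3) ℤ)ᵀ * A100 * (g : Matrix (Fin 3) (Fin 3) ℤ) = A100) := by
  rw [Subgroup.mem_inf]
  have h1 : g ∈ congrStab 1 ↔ (g : Matrix (Fin 3) (Fin 3) ℤ)ᵀ * 1 * g = 1 := Iff.rfl
  have h2 : g ∈ congrStab A100 ↔ (g : Matrix (Fin 3) (Fin 3) ℤ)ᵀ * A100 * g = A100 := Iff.rfl
  rw [h1, h2, Matrix.mul_one]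

lemma classify (g : SL3) (hg : g ∈ congrStab 1 ⊓ congrStab A100) :
    g = G0 ∨ g = G1 ∨ g = G2 ∨ g = G3 := by
  rw [mem_H_iff] at hg
  rcases entries g hg.1 hg.2 g.2 with h | h | h | h
  · left; exact Subtype.ext h
  · right; left; exact Subtype.ext h
  · right; right; left; exact Subtype.ext h
  · right; right; right; exact Subtype.ext h

lemma memG0 : G0 ∈ congrStab 1 ⊓ congrStab A100 := by rw [mem_H_iff]; constructor <;> decide
lemma memG1 : G1 ∈ congrStab 1 ⊓ congrStab A100 := by rw [mem_H_iff]; constructor <;> decide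
lemma memG2 : G2 ∈ congrStab 1 ⊓ congrStab A100 := by rw [mem_H_iff]; constructor <;> decide
lemma memG3 : G3 ∈ congrStab 1 ⊓ congrStab A100 := by rw [mem_H_iff]; constructor <;> decide

lemma hset : ((congrStab 1 ⊓ congrStab A100 : Subgroup SL3) : Set SL3) = {G0, G1, G2, G3} := by
  ext g
  simp only [SetLike.mem_coe, Set.mem_insert_iff, Set.mem_singleton_iff]
  constructor
  · exact classify g
  · rintro (rfl | rfl | rfl | rfl)
    exacts [memG0, memG1, memG2, memG3]

lemma ne01 : G0 ≠ G1 := by rw [Ne, Matrix.SpecialLinearGroup.ext_iff]; intro h; exact absurd (h 1 1) (by decide)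
lemma ne02 : G0 ≠ G2 := by rw [Ne, Matrix.SpecialLinearGroup.ext_iff]; intro h; exact absurd (h 0 0) (by decide)
lemma ne03 : G0 ≠ G3 := by rw [Ne, Matrix.SpecialLinearGroup.ext_iff]; intro h; exact absurd (h 0 0) (by decide)
lemma ne12 : G1 ≠ G2 := by rw [Ne, Matrix.SpecialLinearGroup.ext_iff]; intro h; exact absurd (h 0 0) (by decide)
lemma ne13 : G1 ≠ G3 := by rw [Ne, Matrix.SpecialLinearGroup.ext_iff]; intro h; exact absurd (h 0 0) (by decide)
lemma ne23 : G2 ≠ G3 := by rw [Ne, Matrix.SpecialLinearGroup.ext_iff]; intro h; exact absurd (h 1 2) (by decide)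

lemma hcard : Nat.card (congrStab 1 ⊓ congrStab A100 : Subgroup SL3) = 4 := by
  have : Nat.card (congrStab 1 ⊓ congrStab A100 : Subgroup SL3) =
      ({G0, G1, G2, G3} : Set SL3).ncard := by
    rw [← Nat.card_coe_set_eq, ← hset]
    rfl
  rw [this,
    Set.ncard_insert_of_notMem (by simp [ne01, ne02, ne03])
      (((Set.finite_singleton G3).insert G2).insert G1),
    Set.ncard_insert_of_notMem (by simp [ne12, ne13])
      ((Set.finite_singleton G3).insert G2),
    Set.ncard_insert_of_notMem (by simp [ne23]) (Set.finite_singleton _),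
    Set.ncard_singleton]

lemma sq_eq_one_H (x : ↥(congrStab 1 ⊓ congrStab A100 : Subgroup SL3)) : x ^ 2 = 1 := by
  have key : (x : SL3) * (x : SL3) = 1 := by
    rcases classify x x.2 with h | h | h | h <;>
      (rw [h]; exact Subtype.ext (by decide))
  have : ((x ^ 2 : ↥(congrStab 1 ⊓ congrStab A100 : Subgroup SL3)) : SL3) = ((1 : ↥(congrStab 1 ⊓ congrStab A100 : Subgroup SL3)) : SL3) := by
    push_cast
    rw [pow_two]
    exact key
  exact Subtype.ext this

lemma hexp : Monoid.exponent ↥(congrStab 1 ⊓ congrStab A100 : Subgroup SL3) = 2 := by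
  have hdvd : Monoid.exponent ↥(congrStab 1 ⊓ congrStab A100 : Subgroup SL3) ∣ 2 :=
    Monoid.exponent_dvd_of_forall_pow_eq_one sq_eq_one_H
  rcases (Nat.dvd_prime Nat.prime_two).mp hdvd with h | h
  · exfalso
    have h1 := Monoid.pow_exponent_eq_one
      (⟨G1, memG1⟩ : ↥(congrStab 1 ⊓ congrStab A100 : Subgroup SL3))
    rw [h, pow_one] at h1
    have hG1 : G1 = (1 : SL3) := congrArg Subtype.val h1
    have hG0 : G0 = (1 : SL3) := Subtype.ext (by decide)
    exact ne01 (hG0.trans hG1.symm)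
  · exact h

instance : IsKleinFour (Multiplicative (ZMod 2) × Multiplicative (ZMod 2)) where
  card_four := by simp [Nat.card_prod]
  exponent_two := by simp [Monoid.exponent_prod, Monoid.exponent_multiplicative]

/-- The subgroup `{g ∈ SL(3, ℤ) : gᵀ g = 1 and gᵀ A(1,0,0) g = A(1,0,0)}` (the stabilizer of
the edge `OQ`) is isomorphic to the Klein four group `C₂ × C₂`; in particular it has order 4. -/
theorem stabilizer_of_edge_OQ :
    (∀ g : SL3, g ∈ congrStab 1 ⊓ congrStab A100 ↔
      ((g : Matrix (Fin 3) (Fin 3) ℤ)ᵀ * (g : Matrix (Fin 3) (Fin 3) ℤ) = 1 ∧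
        (g : Matrix (Fin 3) (Fin 3) ℤ)ᵀ * A100 * (g : Matrix (Fin 3) (Fin 3) ℤ) = A100)) ∧
    Nonempty (↥(congrStab 1 ⊓ congrStab A100) ≃*
      Multiplicative (ZMod 2) × Multiplicative (ZMod 2)) ∧
    Nat.card (congrStab 1 ⊓ congrStab A100 : Subgroup SL3) = 4 := by
  refine ⟨mem_H_iff, ?_, hcard⟩
  haveI : IsKleinFour ↥(congrStab 1 ⊓ congrStab A100 : Subgroup SL3) := ⟨hcard, hexp⟩
  exact IsKleinFour.nonempty_mulEquiv
end

section
/- The only matrix g ∈ SL(3,ℤ) satisfying the three conditions gᵀ·A(1,0,0)·g = A(1,0,0), gᵀ·A(1,1,0)·g = A(1,1,0), and gᵀ·[[4,1,2],[1,4,2],[2,2,4]]·g = [[4,1,2],[1,4,2],[2,2,4]] is the identity matrix, where A(1,0,0) = [[2,0,0],[0,2,1],[0,1,2]] and A(1,1,0) = [[2,0,1],[0,2,1],[1,1,2]]. -/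
/-!
An isometry `g` of two forms `A` and `B` (that is, `gᵀ A g = A` and `gᵀ B g = B`) with `A`
nondegenerate commutes with `A⁻¹ B`, or with `adj A · B` when one stays over `ℤ`. Taking
`A = A(1,0,0)` and for `B` the other two forms gives two integer matrices whose common centralizer
consists of the scalar matrices, and the only scalar matrix of determinant one in odd dimension
over `ℤ` is the identity.
-/

open Matrix

namespace Matrix

variable {n R : Type*} [Fintype n] [DecidableEq n] [CommRing R]

theorem mul_eq_transpose_nonsing_inv_mul {g B : Matrix n n R} (hg : IsUnit g.det)
    (hgB : gᵀ * B * g = B) : B * g = g⁻¹ᵀ * B := by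
  conv_rhs => rw [← hgB]
  rw [← mul_assoc, ← mul_assoc, ← transpose_mul, mul_nonsing_inv _ hg, transpose_one, one_mul]

theorem adjugate_mul_transpose_nonsing_inv [IsDomain R] {g A : Matrix n n R}
    (hg : IsUnit g.det) (hA : A.det ≠ 0) (hgA : gᵀ * A * g = A) :
    A.adjugate * g⁻¹ᵀ = g * A.adjugate := by
  apply smul_right_injective _ hA
  calc A.det • (A.adjugate * g⁻¹ᵀ) = A.adjugate * (g⁻¹ᵀ * A) * A.adjugate := by
        rw [mul_assoc, mul_assoc, mul_adjugate, mul_smul_one, Matrix.mul_smul]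
    _ = A.det • (g * A.adjugate) := by
        rw [← mul_eq_transpose_nonsing_inv_mul hg hgA, ← mul_assoc, adjugate_mul,
          smul_mul_assoc, one_mul, smul_mul_assoc]

theorem commute_adjugate_mul [IsDomain R] {g A B : Matrix n n R} (hg : IsUnit g.det)
    (hA : A.det ≠ 0) (hgA : gᵀ * A * g = A) (hgB : gᵀ * B * g = B) :
    Commute g (A.adjugate * B) :=
  calc g * (A.adjugate * B) = A.adjugate * g⁻¹ᵀ * B := by
        rw [adjugate_mul_transpose_nonsing_inv hg hA hgA, mul_assoc]
    _ = A.adjugate * B * g := by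
        rw [mul_assoc, mul_assoc, mul_eq_transpose_nonsing_inv_mul hg hgB]

theorem eq_one_of_eq_smul_one_of_det_eq_one (hn : Odd (Fintype.card n)) {g : Matrix n n ℤ}
    {c : ℤ} (hc : g = c • 1) (hdet : g.det = 1) : g = 1 := by
  rw [hc, det_smul, det_one, mul_one, pow_eq_one_iff_of_ne_zero hn.pos.ne'] at hdet
  rcases hdet with rfl | ⟨-, heven⟩
  · rw [hc, one_smul]
  · exact absurd heven (Nat.not_even_iff_odd.mpr hn)

end Matrix

theorem eq_smul_one_of_commute {g : Matrix (Fin 3) (Fin 3) ℤ}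
    (h₁ : Commute g !![6, 0, 3; -2, 6, 0; 4, 0, 6])
    (h₂ : Commute g !![12, 3, 6; 0, 12, 0; 6, 0, 12]) :
    g = g 0 0 • 1 := by
  have e₁ := h₁.eq
  have e₂ := h₂.eq
  rw [← Matrix.ext_iff] at e₁ e₂
  simp only [Int.reduceNeg, mul_apply, of_apply, cons_val', cons_val_fin_one, Fin.sum_univ_three,
    Fin.isValue, cons_val_zero, cons_val_one, cons_val, Fin.forall_fin_succ, mul_neg, cons_val_succ,
    mul_zero, zero_add, add_zero, Fin.succ_zero_eq_one, Fin.succ_one_eq_two, IsEmpty.forall_iff,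
    and_true, zero_mul, neg_mul] at e₁ e₂
  ext i j
  fin_cases i <;> fin_cases j <;> simp <;> omega

/-- The only `g ∈ SL(3, ℤ)` fixing the three quadratic forms `A(1,0,0)`, `A(1,1,0)` and
`2·A(1,1,1/2) = [[4,1,2],[1,4,2],[2,2,4]]` under the congruence action `A · g = gᵀ A g`
is the identity (triviality of the stabilizer of the 2-cell `t₂ = QM′N`). -/
theorem stabilizer_of_cell_QM'N_trivial (g : SL3)
    (h1 : (g : Matrix (Fin 3) (Fin 3) ℤ)ᵀ * !![2, 0, 0; 0, 2, 1; 0, 1, 2] *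
        (g : Matrix (Fin 3) (Fin 3) ℤ) = !![2, 0, 0; 0, 2, 1; 0, 1, 2])
    (h2 : (g : Matrix (Fin 3) (Fin 3) ℤ)ᵀ * !![2, 0, 1; 0, 2, 1; 1, 1, 2] *
        (g : Matrix (Fin 3) (Fin 3) ℤ) = !![2, 0, 1; 0, 2, 1; 1, 1, 2])
    (h3 : (g : Matrix (Fin 3) (Fin 3) ℤ)ᵀ * !![4, 1, 2; 1, 4, 2; 2, 2, 4] *
        (g : Matrix (Fin 3) (Fin 3) ℤ) = !![4, 1, 2; 1, 4, 2; 2, 2, 4]) :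
    g = 1 := by
  have hg : IsUnit (g : Matrix (Fin 3) (Fin 3) ℤ).det := by simp
  have hA : det !![(2 : ℤ), 0, 0; 0, 2, 1; 0, 1, 2] ≠ 0 := by rw [det_fin_three]; decide
  have c₂ := commute_adjugate_mul hg hA h1 h2
  have c₃ := commute_adjugate_mul hg hA h1 h3
  have hM₂ : adjugate !![(2 : ℤ), 0, 0; 0, 2, 1; 0, 1, 2] * !![2, 0, 1; 0, 2, 1; 1, 1, 2] =
      !![6, 0, 3; -2, 6, 0; 4, 0, 6] := by rw [adjugate_fin_three]; decide
  have hM₃ : adjugate !![(2 : ℤ), 0, 0; 0, 2, 1; 0, 1, 2] * !![4, 1, 2; 1, 4, 2; 2, 2, 4] =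
      !![12, 3, 6; 0, 12, 0; 6, 0, 12] := by rw [adjugate_fin_three]; decide
  rw [hM₂] at c₂
  rw [hM₃] at c₃
  exact Subtype.ext <| eq_one_of_eq_smul_one_of_det_eq_one (by decide) (eq_smul_one_of_commute c₂ c₃) g.2
end
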